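/- There exists a constant C₃ > 0 such that for all reals x, y ≥ C₃ with x ≠ y and every integer n ≥ x + 1, there exists ε₀ > 0 so that for every ε ∈ (0, ε₀) the following holds in dimension d = 1: for every pair of vertices v₁, v₂ of G_{n,1}(x,ε) whose positions p₁, p₂ in the natural embedding satisfy |p₁ − p₂| > x and max(|p₁|, |p₂|) ≤ n − x − 1, and for every (1,y)-annulus embedding f of G_{n,1}(x,ε) into ℝ, one has |f(v₁) − f(v₂)| > y. -/

import Mathlib

/-- `p ∈ ℝ^d` is a point of the scaled integer lattice `εℤ^d`. -/
def InLattice {d : ℕ} (ε : ℝ) (p : EuclideanSpace ℝ (Fin d)) : Prop :=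
  ∀ i, ∃ z : ℤ, p i = ε * z

/-- The vertex set of `G_{n,d}(x,ε)`: points of `εℤ^d` in the closed ball `B(0,n)`. -/
def GndVert (d n : ℕ) (ε : ℝ) : Type :=
  {p : EuclideanSpace ℝ (Fin d) // InLattice ε p ∧ ‖p‖ ≤ (n : ℝ)}

/-- The graph `G_{n,d}(x,ε)`: two distinct lattice points of `B(0,n)` are adjacent
iff their Euclidean distance lies in `[1, x]`. Its natural `(1,x)`-annulus
embedding is the identity on the vertex set. -/
def Gnd (d n : ℕ) (x ε : ℝ) : SimpleGraph (GndVert d n ε) where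
  Adj u v := u ≠ v ∧ dist u.1 v.1 ∈ Set.Icc 1 x
  symm := ⟨fun u v ⟨h, h'⟩ => ⟨h.symm, by rwa [dist_comm]⟩⟩
  loopless := ⟨fun u h => h.1 rfl⟩

/-- `f` is a `(1,y)`-annulus embedding of the simple graph `G` in `ℝ^d`:
an injective map such that two distinct vertices are adjacent iff their
images are at Euclidean distance in `[1, y]`. -/
def IsAnnulusEmbedding {d : ℕ} {V : Type*} (G : SimpleGraph V) (R₁ R₂ : ℝ)
    (f : V → EuclideanSpace ℝ (Fin d)) : Prop :=
  Function.Injective f ∧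
    ∀ u v : V, u ≠ v → (G.Adj u v ↔ dist (f u) (f v) ∈ Set.Icc R₁ R₂)
private lemma euclid_dist1 (p q : EuclideanSpace ℝ (Fin 1)) : dist p q = |p 0 - q 0| := by
  rw [EuclideanSpace.dist_eq, Fin.sum_univ_one, Real.sqrt_sq_eq_abs, Real.dist_eq, abs_abs]

private lemma euclid_norm1 (p : EuclideanSpace ℝ (Fin 1)) : ‖p‖ = |p 0| := by
  rw [EuclideanSpace.norm_eq, Fin.sum_univ_one, Real.sqrt_sq_eq_abs, Real.norm_eq_abs, abs_abs]

private def pt (c : ℝ) : EuclideanSpace ℝ (Fin 1) := WithLp.toLp 2 (fun _ => c)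

private lemma pt_apply (c : ℝ) (i : Fin 1) : pt c i = c := rfl

private lemma floor_close {s t : ℝ} (h : ⌊s⌋ = ⌊t⌋) : |s - t| < 1 := by
  have h1 := Int.floor_le s
  have h2 := Int.lt_floor_add_one s
  have h3 := Int.floor_le t
  have h4 := Int.lt_floor_add_one t
  rw [h] at h1 h2
  rw [abs_sub_lt_iff]
  constructor <;> linarith

set_option maxHeartbeats 1000000 in
private lemma key (x y : ℝ) (hx : 100 ≤ x) (hy : 100 ≤ y)
    (n : ℕ) (ε : ℝ) (hε : 0 < ε) (hε1 : ε < 1)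
    (v₁ v₂ : GndVert 1 n ε)
    (hd : x < dist v₁.1 v₂.1) (h1 : ‖v₁.1‖ ≤ (n : ℝ) - x - 1)
    (horder : v₂.1 0 ≤ v₁.1 0)
    (f : GndVert 1 n ε → EuclideanSpace ℝ (Fin 1))
    (hf : IsAnnulusEmbedding (Gnd 1 n x ε) 1 y f) :
    y < dist (f v₁) (f v₂) := by
  by_contra hcon
  push_neg at hcon
  obtain ⟨-, hiff⟩ := hf
  set a := v₁.1 0 with ha
  set b := v₂.1 0 with hb
  have hdab : dist v₁.1 v₂.1 = a - b := by
    rw [euclid_dist1, ← ha, ← hb, abs_of_nonneg (by linarith)]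
  have hab : x < a - b := by rwa [hdab] at hd
  have hne12 : v₁ ≠ v₂ := by
    intro h; rw [h, dist_self] at hd; linarith
  have hnadj12 : ¬ (Gnd 1 n x ε).Adj v₁ v₂ := by
    intro h; have h2 := h.2.2; rw [hdab] at h2; linarith
  have hδ : dist (f v₁) (f v₂) < 1 := by
    by_contra h; push_neg at h
    exact hnadj12 ((hiff v₁ v₂ hne12).mpr (Set.mem_Icc.mpr ⟨h, hcon⟩))
  -- the step length g : a lattice multiple in [1, 2)
  set m : ℕ := ⌈1/ε⌉₊ with hm
  set g : ℝ := ε * m with hgdef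
  have hg1 : (1:ℝ) ≤ g := by
    have h := Nat.le_ceil (1/ε)
    have h2 : ε * (1/ε) ≤ ε * m := mul_le_mul_of_nonneg_left h hε.le
    rwa [mul_one_div_cancel hε.ne'] at h2
  have hg2 : g < 2 := by
    have h := Nat.ceil_lt_add_one (by positivity : (0:ℝ) ≤ 1/ε)
    have h2 : ε * (m:ℝ) < ε * (1/ε + 1) := mul_lt_mul_of_pos_left h hε
    have h3 : ε * (1/ε + 1) = 1 + ε := by field_simp
    rw [h3] at h2; linarith
  obtain ⟨z₀, hz₀⟩ := v₁.2.1 0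
  have hanorm : |a| ≤ (n:ℝ) - x - 1 := by rwa [euclid_norm1] at h1
  have hjfacts : ∀ j : Fin 10, (0:ℝ) ≤ ((j:ℕ):ℝ) ∧ ((j:ℕ):ℝ) ≤ 9 := by
    intro j
    exact ⟨by positivity, by exact_mod_cast Nat.lt_succ_iff.mp j.isLt⟩
  -- the clique vertices
  have hwmem : ∀ j : Fin 10,
      InLattice ε (pt (a + ((j:ℕ)+1) * g)) ∧ ‖pt (a + ((j:ℕ)+1) * g)‖ ≤ (n:ℝ) := by
    intro j
    obtain ⟨hj0, hj9⟩ := hjfacts j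
    have hjg : (((j:ℕ):ℝ)+1) * g ≤ 20 := by nlinarith
    have hjg0 : (0:ℝ) ≤ (((j:ℕ):ℝ)+1) * g := by nlinarith
    constructor
    · intro i
      refine ⟨z₀ + ((j:ℕ)+1) * m, ?_⟩
      rw [pt_apply, ← ha] at *
      rw [hz₀, hgdef]; push_cast; ring
    · rw [euclid_norm1, pt_apply]
      calc |a + (((j:ℕ):ℝ)+1) * g| ≤ |a| + |(((j:ℕ):ℝ)+1) * g| := abs_add_le _ _
        _ = |a| + (((j:ℕ):ℝ)+1) * g := by rw [abs_of_nonneg hjg0]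
        _ ≤ ((n:ℝ) - x - 1) + 20 := by linarith
        _ ≤ (n:ℝ) := by linarith
  set w : Fin 10 → GndVert 1 n ε :=
    fun j => ⟨pt (a + ((j:ℕ)+1) * g), hwmem j⟩ with hw
  have hwc : ∀ j : Fin 10, (w j).1 0 = a + (((j:ℕ):ℝ)+1) * g := fun j => rfl
  clear_value w
  have hdw1 : ∀ j, dist (w j).1 v₁.1 = (((j:ℕ):ℝ)+1) * g := by
    intro j
    obtain ⟨hj0, hj9⟩ := hjfacts j
    rw [euclid_dist1, hwc, ← ha]
    have h0 : a + (((j:ℕ):ℝ)+1) * g - a = (((j:ℕ):ℝ)+1) * g := by ring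
    rw [h0, abs_of_nonneg (by nlinarith)]
  have hdw1mem : ∀ j, dist (w j).1 v₁.1 ∈ Set.Icc 1 x := by
    intro j
    obtain ⟨hj0, hj9⟩ := hjfacts j
    rw [hdw1]
    exact ⟨by nlinarith, by nlinarith⟩
  have hwne1 : ∀ j, w j ≠ v₁ := by
    intro j h
    have h0 := hdw1 j
    obtain ⟨hj0, hj9⟩ := hjfacts j
    rw [h, dist_self] at h0
    nlinarith
  have hfw1 : ∀ j, dist (f (w j)) (f v₁) ∈ Set.Icc 1 y :=
    fun j => (hiff _ _ (hwne1 j)).mp ⟨hwne1 j, hdw1mem j⟩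
  have hdw2 : ∀ j, dist (w j).1 v₂.1 = (a - b) + (((j:ℕ):ℝ)+1) * g := by
    intro j
    obtain ⟨hj0, hj9⟩ := hjfacts j
    rw [euclid_dist1, hwc, ← hb]
    have h0 : a + (((j:ℕ):ℝ)+1) * g - b = (a - b) + (((j:ℕ):ℝ)+1) * g := by ring
    rw [h0, abs_of_nonneg (by nlinarith)]
  have hdw2x : ∀ j, x < dist (w j).1 v₂.1 := by
    intro j
    obtain ⟨hj0, hj9⟩ := hjfacts j
    rw [hdw2]
    have h0 : (0:ℝ) ≤ (((j:ℕ):ℝ)+1) * g := by positivity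
    linarith
  have hwne2 : ∀ j, w j ≠ v₂ := by
    intro j h
    have h0 := hdw2x j
    rw [h, dist_self] at h0
    linarith
  have hnadj2 : ∀ j, ¬ (Gnd 1 n x ε).Adj (w j) v₂ := by
    intro j h
    have h2 := h.2.2
    linarith [hdw2x j]
  have hfw2 : ∀ j, dist (f (w j)) (f v₂) ∉ Set.Icc 1 y :=
    fun j h => hnadj2 j ((hiff _ _ (hwne2 j)).mpr h)
  -- coordinates of images
  set A := (f v₁) 0 with hA
  set B := (f v₂) 0 with hB
  have hAB : |A - B| < 1 := by rwa [euclid_dist1, ← hA, ← hB] at hδ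
  set t : Fin 10 → ℝ := fun j => (f (w j)) 0 - A with htdef
  have ht1 : ∀ j, 1 ≤ |t j| ∧ |t j| ≤ y := by
    intro j
    have h := hfw1 j
    rwa [euclid_dist1, ← hA] at h
  have ht2 : ∀ j, |(f (w j)) 0 - B| < 1 ∨ y < |(f (w j)) 0 - B| := by
    intro j
    have h := hfw2 j
    rw [euclid_dist1, ← hB] at h
    rw [Set.mem_Icc, not_and_or] at h
    rcases h with h | h
    · exact Or.inl (by push_neg at h; exact h)
    · exact Or.inr (by push_neg at h; exact h)
  set F : Fin 10 → ℤ := fun j => ⌊t j⌋ with hF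
  -- injectivity of F
  have hinj : ∀ i j : Fin 10, F i = F j → i = j := by
    intro i j hFeq
    by_contra hij
    -- w i and w j are adjacent
    have hne : w i ≠ w j := by
      intro h
      have h0 : (w i).1 0 = (w j).1 0 := by rw [h]
      rw [hwc, hwc] at h0
      have hgne : g ≠ 0 := by linarith
      have h1' : (((i:ℕ):ℝ)+1) * g = (((j:ℕ):ℝ)+1) * g := by linarith
      have : ((i:ℕ):ℝ) = ((j:ℕ):ℝ) := by
        have := mul_right_cancel₀ hgne h1'
        linarith
      have : (i:ℕ) = (j:ℕ) := by exact_mod_cast this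
      exact hij (Fin.ext this)
    have hvne : (i:ℕ) ≠ (j:ℕ) := fun h => hij (Fin.ext h)
    have habs : 1 ≤ |((i:ℕ):ℝ) - ((j:ℕ):ℝ)| ∧ |((i:ℕ):ℝ) - ((j:ℕ):ℝ)| ≤ 9 := by
      obtain ⟨hi0, hi9⟩ := hjfacts i
      obtain ⟨hj0, hj9⟩ := hjfacts j
      rcases lt_or_gt_of_ne hvne with h | h
      · have h' : ((i:ℕ):ℝ) + 1 ≤ ((j:ℕ):ℝ) := by exact_mod_cast h
        rw [abs_of_nonpos (by linarith)]
        constructor <;> linarith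
      · have h' : ((j:ℕ):ℝ) + 1 ≤ ((i:ℕ):ℝ) := by exact_mod_cast h
        rw [abs_of_nonneg (by linarith)]
        constructor <;> linarith
    have hdij : dist (w i).1 (w j).1 = |((i:ℕ):ℝ) - ((j:ℕ):ℝ)| * g := by
      rw [euclid_dist1, hwc, hwc]
      have h0 : a + (((i:ℕ):ℝ)+1) * g - (a + (((j:ℕ):ℝ)+1) * g)
          = (((i:ℕ):ℝ) - ((j:ℕ):ℝ)) * g := by ring
      rw [h0, abs_mul, abs_of_nonneg (by linarith : (0:ℝ) ≤ g)]
    have hadj : (Gnd 1 n x ε).Adj (w i) (w j) := by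
      refine ⟨hne, ?_⟩
      rw [hdij]
      constructor
      · nlinarith [habs.1]
      · nlinarith [habs.1, habs.2]
    have hfij := (hiff _ _ hne).mp hadj
    have hfij1 : 1 ≤ |t i - t j| := by
      have h := hfij.1
      rw [euclid_dist1] at h
      have h0 : (f (w i)) 0 - (f (w j)) 0 = t i - t j := by rw [htdef]; ring
      rwa [h0] at h
    have := floor_close hFeq
    linarith
  -- the values of F
  set Ay : ℤ := ⌊y⌋ with hAy
  set By : ℤ := ⌊-y⌋ with hBy
  set T : Finset ℤ := {-2, -1, 0, 1, Ay - 1, Ay, By, By + 1} with hT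
  have hmem : ∀ j, F j ∈ T := by
    intro j
    obtain ⟨ht1l, ht1u⟩ := ht1 j
    have htj : f (w j) 0 - B = t j + (A - B) := by rw [htdef]; ring
    have hABl := (abs_lt.mp hAB).1
    have hABu := (abs_lt.mp hAB).2
    have hFj : F j = ⌊t j⌋ := rfl
    have hmem' : F j = -2 ∨ F j = -1 ∨ F j = 0 ∨ F j = 1 ∨
        F j = Ay - 1 ∨ F j = Ay ∨ F j = By ∨ F j = By + 1 := by
      rcases ht2 j with hlt | hgt
      · -- close to B: |t j| < 2
        rw [htj] at hlt
        obtain ⟨hl, hu⟩ := abs_lt.mp hlt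
        have hup : F j ≤ 1 := by
          have : ⌊t j⌋ < (2:ℤ) := Int.floor_lt.mpr (by push_cast; linarith)
          omega
        have hlo : (-2:ℤ) ≤ F j := Int.le_floor.mpr (by push_cast; linarith)
        omega
      · rw [htj] at hgt
        rcases le_or_gt 0 (t j) with hpos | hneg
        · -- t j ∈ (y-1, y]
          have hub : t j ≤ y := by rwa [abs_of_nonneg hpos] at ht1u
          have hlb : y - 1 < t j := by
            have h0 : |t j + (A - B)| ≤ |t j| + |A - B| := abs_add_le _ _
            rw [abs_of_nonneg hpos] at h0
            linarith
          have h1' : F j ≤ Ay := Int.floor_le_floor hub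
          have h2' : Ay - 1 ≤ F j := by
            have h3' : ⌊y - (1:ℤ)⌋ ≤ ⌊t j⌋ := Int.floor_le_floor (by push_cast; linarith)
            rw [Int.floor_sub_intCast] at h3'
            omega
          omega
        · -- t j ∈ [-y, 1-y)
          have hub : -y ≤ t j := by
            rw [abs_of_neg hneg] at ht1u; linarith
          have hlb : t j < 1 - y := by
            have h0 : |t j + (A - B)| ≤ |t j| + |A - B| := abs_add_le _ _
            rw [abs_of_neg hneg] at h0
            linarith
          have h1' : By ≤ F j := Int.le_floor.mpr (le_trans (Int.floor_le (-y)) hub)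
          have h2' : F j ≤ By + 1 := by
            have h3' := Int.lt_floor_add_one (-y)
            have : ⌊t j⌋ < By + 2 := Int.floor_lt.mpr (by push_cast; linarith)
            omega
          omega
    rw [hT]
    simp only [Finset.mem_insert, Finset.mem_singleton]
    tauto
  -- cardinality contradiction
  have hcard := Finset.card_le_card_of_injOn (s := (Finset.univ : Finset (Fin 10)))
    (t := T) F (fun j _ => hmem j) (fun i _ j _ h => hinj i j h)
  rw [Finset.card_univ, Fintype.card_fin] at hcard
  have hTcard : T.card ≤ 8 := by
    rw [hT]
    apply le_trans (Finset.card_insert_le _ _)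
    have h1' := Finset.card_insert_le (-1 : ℤ) ({0, 1, Ay - 1, Ay, By, By + 1} : Finset ℤ)
    have h2' := Finset.card_insert_le (0 : ℤ) ({1, Ay - 1, Ay, By, By + 1} : Finset ℤ)
    have h3' := Finset.card_insert_le (1 : ℤ) ({Ay - 1, Ay, By, By + 1} : Finset ℤ)
    have h4' := Finset.card_insert_le (Ay - 1 : ℤ) ({Ay, By, By + 1} : Finset ℤ)
    have h5' := Finset.card_insert_le (Ay : ℤ) ({By, By + 1} : Finset ℤ)
    have h6' := Finset.card_insert_le (By : ℤ) ({By + 1} : Finset ℤ)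
    have h7' : ({By + 1} : Finset ℤ).card = 1 := Finset.card_singleton _
    omega
  omega

/-- Dimension-one analogue of Lemma 2.5: there is `C₃ > 0` such that for all
distinct `x, y ≥ C₃`, all integers `n ≥ x + 1` and all sufficiently small
`ε > 0`, vertices of `G_{n,1}(x,ε)` at distance more than `x` in the natural
embedding, both of norm at most `n - x - 1`, are at distance more than `y` in
every `(1,y)`-annulus embedding into `ℝ`. -/
theorem far_pairs_stay_far_dim_one :
    ∃ C₃ : ℝ, 0 < C₃ ∧ ∀ x y : ℝ, C₃ ≤ x → C₃ ≤ y → x ≠ y →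
      ∀ n : ℕ, x + 1 ≤ (n : ℝ) →
        ∃ ε₀ : ℝ, 0 < ε₀ ∧ ∀ ε : ℝ, 0 < ε → ε < ε₀ →
          ∀ v₁ v₂ : GndVert 1 n ε,
            x < dist v₁.1 v₂.1 →
            ‖v₁.1‖ ≤ (n : ℝ) - x - 1 → ‖v₂.1‖ ≤ (n : ℝ) - x - 1 →
            ∀ f : GndVert 1 n ε → EuclideanSpace ℝ (Fin 1),
              IsAnnulusEmbedding (Gnd 1 n x ε) 1 y f →
              y < dist (f v₁) (f v₂) := by
  refine ⟨100, by norm_num, ?_⟩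
  intro x y hx hy _ n _
  refine ⟨1, one_pos, ?_⟩
  intro ε hε hε1 v₁ v₂ hd h1 h2 f hf
  rcases le_total (v₂.1 0) (v₁.1 0) with h | h
  · exact key x y hx hy n ε hε hε1 v₁ v₂ hd h1 h f hf
  · have := key x y hx hy n ε hε hε1 v₂ v₁ (by rwa [dist_comm]) h2 h f hf
    rwa [dist_comm] at this
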